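/- arXiv:1706.04608 — 3 statements merged into one kernel-verified Lean document; each statement's English description precedes it below -/
import Mathlib

section
/- Let n ≥ 1 and 0 ≤ m ≤ n, and let α_1, …, α_n be positive real numbers, all different from 1, such that α_1, …, α_m are not integers and α_{m+1}, …, α_n are integers. Suppose there exist a subset A ⊆ {1, …, n} with {1, …, m} ⊆ A, a nonnegative integer k, signs ε_j ∈ {−1, +1} for j ∈ A, and signs δ_i ∈ {−1, +1} for 1 ≤ i ≤ k, such that ∑_{j∈A} ε_j α_j + ∑_{i=1}^k δ_i = 0 and ∑_{j∉A} (α_j − 1) = |A| + k − 2. Then there exist signs ε'_1, …, ε'_m ∈ {−1, +1} and a nonnegative integer k' such that ∑_{j=1}^m ε'_j α_j = k' and the number k'' := ∑_{j=m+1}^n α_j − n − k' + 2 is a nonnegative even integer. -/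
/-!
Let `S` be the set of non-integer indices. Since the `α_j` with `j ∈ A \ S` and the `δ_i` are
integers, the relation `∑_A ε_j α_j + ∑ δ_i = 0` makes `t := ∑_S ε_j α_j` an integer; flipping
all signs by `σ = sign t` gives `∑_S σ ε_j α_j = |t| =: k'`. Substituting `∑_{Aᶜ} α_j = n + k - 2`,
the number `k''` becomes `∑_{A \ S} (1 + σ ε_j) α_j + ∑_i (1 + σ δ_i)`, a sum of terms that are
each `0` or twice a nonnegative integer.
-/

open Finset

section SignedSums

variable {ι : Type*} (s : Finset ι) {x a : ι → ℝ}

theorem exists_int_eq_sum_sign_mul (hx : ∀ i ∈ s, x i = 1 ∨ x i = -1)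
    (ha : ∀ i ∈ s, ∃ z : ℤ, a i = z) : ∃ z : ℤ, ∑ i ∈ s, x i * a i = z := by
  have hmem : ∑ i ∈ s, x i * a i ∈ (Int.castRingHom ℝ).range := by
    refine sum_mem fun i hi => mul_mem ?_ ?_
    · rcases hx i hi with h | h
      · exact ⟨1, by simp [h]⟩
      · exact ⟨-1, by simp [h]⟩
    · obtain ⟨z, hz⟩ := ha i hi
      exact ⟨z, by simp [hz]⟩
  obtain ⟨z, hz⟩ := hmem
  exact ⟨z, by simpa using hz.symm⟩

theorem exists_even_eq_sum_add_sign_mul_sum {σ : ℝ} (hσ : σ = 1 ∨ σ = -1)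
    (hx : ∀ i ∈ s, x i = 1 ∨ x i = -1) (ha : ∀ i ∈ s, ∃ z : ℕ, a i = z) :
    ∃ e : ℕ, Even e ∧ (e : ℝ) = ∑ i ∈ s, a i + σ * ∑ i ∈ s, x i * a i := by
  classical
  induction s using Finset.induction_on with
  | empty => exact ⟨0, Even.zero, by simp⟩
  | insert i s hi ih =>
    obtain ⟨e, he, hes⟩ := ih (fun j hj => hx j (mem_insert_of_mem hj))
      (fun j hj => ha j (mem_insert_of_mem hj))
    obtain ⟨z, hz⟩ := ha i (mem_insert_self i s)
    rw [sum_insert hi, sum_insert hi]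
    have hterm : a i + σ * (x i * a i) = 0 ∨ a i + σ * (x i * a i) = 2 * z := by
      rcases hσ with rfl | rfl <;> rcases hx i (mem_insert_self i s) with h | h <;>
        simp only [h, hz] <;> first | left; ring1 | right; ring1
    rcases hterm with h | h
    · exact ⟨e, he, by linear_combination hes - h⟩
    · exact ⟨e + 2 * z, he.add (even_two_mul z), by push_cast; linear_combination hes - h⟩

end SignedSums

theorem exists_sign_mul_eq_natAbs (t : ℤ) :
    ∃ σ : ℝ, (σ = 1 ∨ σ = -1) ∧ σ * t = t.natAbs := by
  rw [Nat.cast_natAbs, Int.cast_abs]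
  rcases le_or_gt 0 (t : ℝ) with h | h
  · exact ⟨1, Or.inl rfl, by rw [one_mul, abs_of_nonneg h]⟩
  · exact ⟨-1, Or.inr rfl, by rw [neg_one_mul, abs_of_neg h]⟩

theorem exists_natCast_eq_of_intCast_eq {x : ℝ} (hx : 0 ≤ x) (h : ∃ z : ℤ, x = z) :
    ∃ z : ℕ, x = z := by
  obtain ⟨z, rfl⟩ := h
  lift z to ℕ using Int.cast_nonneg_iff.mp hx
  exact ⟨z, by simp⟩

theorem sum_compl_eq_card_add {ι : Type*} [Fintype ι] [DecidableEq ι] {A : Finset ι}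
    {f : ι → ℝ} {c : ℝ} (h : ∑ j ∈ Aᶜ, (f j - 1) = #A + c) :
    ∑ j ∈ Aᶜ, f j = Fintype.card ι + c := by
  have hcard : (#A : ℝ) + #Aᶜ = Fintype.card ι := by exact_mod_cast A.card_add_card_compl
  rw [sum_sub_distrib, sum_const, nsmul_one] at h
  linear_combination h + hcard

theorem exists_even_eq_sum_compl_add_sign_mul {ι : Type*} [Fintype ι] [DecidableEq ι]
    {S A : Finset ι} (hSA : S ⊆ A) {α ε : ι → ℝ} {k : ℕ} {δ : Fin k → ℝ} {σ : ℝ}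
    (hσ : σ = 1 ∨ σ = -1) (hε : ∀ j ∈ A \ S, ε j = 1 ∨ ε j = -1) (hδ : ∀ i, δ i = 1 ∨ δ i = -1)
    (hα : ∀ j ∈ A \ S, ∃ z : ℕ, α j = z) (hcard : ∑ j ∈ Aᶜ, (α j - 1) = #A + k - 2) :
    ∃ e : ℕ, Even e ∧
      (e : ℝ) = ∑ j ∈ Sᶜ, α j - Fintype.card ι + σ * (∑ j ∈ A \ S, ε j * α j + ∑ i, δ i) + 2 := by
  obtain ⟨e₁, he₁, h₁⟩ := exists_even_eq_sum_add_sign_mul_sum (A \ S) hσ hε hα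
  obtain ⟨e₂, he₂, h₂⟩ := exists_even_eq_sum_add_sign_mul_sum (a := fun _ => (1 : ℝ)) univ hσ
    (fun i _ => hδ i) fun _ _ => ⟨1, Nat.cast_one.symm⟩
  simp only [mul_one, sum_const, card_univ, Fintype.card_fin, nsmul_one] at h₂
  refine ⟨e₁ + e₂, he₁.add he₂, ?_⟩
  have hAS := sum_sdiff (f := α) hSA
  have hSc := sum_compl_add_sum S α
  have hAc := sum_compl_add_sum A α
  push_cast
  linear_combination h₁ + h₂ - hSc + hAc + hAS -
    sum_compl_eq_card_add (c := k - 2) (by rw [hcard]; ring)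

theorem condition_one_implies_alt_bet_general
    (n m : ℕ) (α : Fin n → ℝ)
    (hpos : ∀ j, 0 < α j)
    (hint : ∀ j : Fin n, m ≤ (j : ℕ) → ∃ a : ℤ, α j = a)
    (hcond : ∃ (A : Finset (Fin n)), (∀ j : Fin n, (j : ℕ) < m → j ∈ A) ∧
      ∃ (k : ℕ) (ε : Fin n → ℝ) (δ : Fin k → ℝ),
        (∀ j ∈ A, ε j = 1 ∨ ε j = -1) ∧
        (∀ i, δ i = 1 ∨ δ i = -1) ∧
        ∑ j ∈ A, ε j * α j + ∑ i, δ i = 0 ∧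
        ∑ j ∈ Aᶜ, (α j - 1) = (A.card : ℝ) + k - 2) :
    ∃ (ε' : Fin n → ℝ) (k' : ℕ),
      (∀ j : Fin n, (j : ℕ) < m → ε' j = 1 ∨ ε' j = -1) ∧
      ∑ j ∈ Finset.univ.filter (fun j : Fin n => (j : ℕ) < m), ε' j * α j = k' ∧
      ∃ k'' : ℕ, Even k'' ∧
        (k'' : ℝ) = ∑ j ∈ Finset.univ.filter (fun j : Fin n => m ≤ (j : ℕ)), α j
          - n - k' + 2 := by
  classical
  obtain ⟨A, hmA, k, ε, δ, hε, hδ, hsum, hcard⟩ := hcond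
  set S := univ.filter (fun j : Fin n => (j : ℕ) < m)
  have hSA : S ⊆ A := fun j hj => hmA j (mem_filter.mp hj).2
  have hAS : ∀ j ∈ A \ S, m ≤ (j : ℕ) := fun j hj => by
    simpa [S] using (mem_sdiff.mp hj).2
  have hεAS : ∀ j ∈ A \ S, ε j = 1 ∨ ε j = -1 := fun j hj => hε j (mem_sdiff.mp hj).1
  obtain ⟨p, hp⟩ := exists_int_eq_sum_sign_mul (A \ S) hεAS fun j hj => hint j (hAS j hj)
  obtain ⟨d, hd⟩ := exists_int_eq_sum_sign_mul (a := fun _ => (1 : ℝ)) univ (fun i _ => hδ i)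
    fun _ _ => ⟨1, Int.cast_one.symm⟩
  simp only [mul_one] at hd
  obtain ⟨σ, hσ, hk'⟩ := exists_sign_mul_eq_natAbs (-(p + d))
  obtain ⟨e, he, hek⟩ := exists_even_eq_sum_compl_add_sign_mul hSA hσ hεAS hδ
    (fun j hj => exists_natCast_eq_of_intCast_eq (hpos j).le (hint j (hAS j hj))) hcard
  have hT : ∑ j ∈ S, ε j * α j = ((-(p + d) : ℤ) : ℝ) := by
    push_cast
    linear_combination sum_sdiff (f := fun j => ε j * α j) hSA + hsum - hp - hd
  refine ⟨fun j => σ * ε j, (-(p + d)).natAbs, ?_, ?_, e, he, ?_⟩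
  · intro j hj
    rcases hσ with rfl | rfl <;> rcases hε j (hmA j hj) with h | h <;> simp [h]
  · simp only [mul_assoc, ← mul_sum, hT, ← hk']
  · have hSc : univ.filter (fun j : Fin n => m ≤ (j : ℕ)) = Sᶜ := by
      simp only [S, compl_filter, not_lt]
    rw [hSc, ← hk', hek, Fintype.card_fin]
    push_cast
    linear_combination σ * (hp + hd)

theorem condition_one_implies_alt_bet
    (n m : ℕ) (hn : 1 ≤ n) (hmn : m ≤ n) (α : Fin n → ℝ)
    (hpos : ∀ j, 0 < α j)
    (hne1 : ∀ j, α j ≠ 1)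
    (hnonint : ∀ j : Fin n, (j : ℕ) < m → ¬ ∃ a : ℤ, α j = a)
    (hint : ∀ j : Fin n, m ≤ (j : ℕ) → ∃ a : ℤ, α j = a)
    (hcond : ∃ (A : Finset (Fin n)), (∀ j : Fin n, (j : ℕ) < m → j ∈ A) ∧
      ∃ (k : ℕ) (ε : Fin n → ℝ) (δ : Fin k → ℝ),
        (∀ j ∈ A, ε j = 1 ∨ ε j = -1) ∧
        (∀ i, δ i = 1 ∨ δ i = -1) ∧
        ∑ j ∈ A, ε j * α j + ∑ i, δ i = 0 ∧
        ∑ j ∈ Aᶜ, (α j - 1) = (A.card : ℝ) + k - 2) :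
    ∃ (ε' : Fin n → ℝ) (k' : ℕ),
      (∀ j : Fin n, (j : ℕ) < m → ε' j = 1 ∨ ε' j = -1) ∧
      ∑ j ∈ Finset.univ.filter (fun j : Fin n => (j : ℕ) < m), ε' j * α j = k' ∧
      ∃ k'' : ℕ, Even k'' ∧
        (k'' : ℝ) = ∑ j ∈ Finset.univ.filter (fun j : Fin n => m ≤ (j : ℕ)), α j
          - n - k' + 2 :=
  condition_one_implies_alt_bet_general n m α hpos hint hcond
end

section
/- Let 0 ≤ m ≤ n, let α_1, …, α_m be positive non-integer real numbers, and let α_{m+1}, …, α_n be integers ≥ 2. Let ε_1, …, ε_m ∈ {−1, +1} and let k', k'' be nonnegative integers with ∑_{j=1}^m ε_j α_j = k' and k'' = ∑_{j=m+1}^n α_j − n − k' + 2. Set q := m + k' + k'' and c := (α_1, …, α_m, 1, …, 1) ∈ ℝ^q with k' + k'' trailing ones, and suppose c = η·b for a primitive integer vector b = (b_1, …, b_q) and some η ≠ 0. If there exist signs δ_1, …, δ_{k'+k''} ∈ {−1, +1} with ∑_{j=1}^m ε_j α_j + ∑_{i=1}^{k'+k''} δ_i = 0, pairwise distinct complex numbers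 z_1, …, z_q, a nonzero constant C ∈ ℂ, and pairwise distinct complex numbers w_{m+1}, …, w_n such that, setting c_j = ε_j α_j for 1 ≤ j ≤ m and c_{m+i} = δ_i for 1 ≤ i ≤ k' + k'', one has ∑_{j=1}^q c_j ∏_{i≠j}(X − z_i) = C ∏_{j=m+1}^n (X − w_j)^{α_j − 1} in ℂ[X], then 2·max_{m+1≤j≤n} α_j ≤ ∑_{j=1}^q |b_j|. -/
/-!
Write the residues as `η * B j` with `B j ∈ ℤ` and put `g = ∏ (X - z j) ^ (B j)⁺`,
`h = ∏ (X - z j) ^ (B j)⁻`, so that `g / h` has logarithmic derivative `∑ B j / (X - z j)`;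
in polynomial terms `W(h, g) * ∏ (X - z j) = g * h * N`, where `W` is the Wronskian and `N` the
numerator of that partial fraction. If `N` vanishes to order `α - 1` at a point `w` (which is not
a pole), then `u = h(w) g - g(w) h` vanishes at `w` and `W(h, u) = h(w) W(h, g)` vanishes to
order `α - 1`, so `u` vanishes to order `α`. As `∑ B j = 0`, both `g` and `h` have degree
`∑ |B j| / 2`, and `u ≠ 0` because it does not vanish at a zero of `g`; hence
`α ≤ ∑ |B j| / 2`. Finally `|B j| = |b j|`, since the residues are `± c j = ± η b j`.
-/

open Finset Polynomial

theorem sum_toNat_neg_eq_sum_toNat {ι : Type*} {s : Finset ι} {B : ι → ℤ}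
    (hB : ∑ i ∈ s, B i = 0) : ∑ i ∈ s, (-B i).toNat = ∑ i ∈ s, (B i).toNat := by
  have h : ∑ i ∈ s, (((B i).toNat : ℤ) - (-B i).toNat) = 0 := by
    simpa only [Int.toNat_sub_toNat_neg] using hB
  rw [sum_sub_distrib, sub_eq_zero] at h
  exact_mod_cast h.symm

theorem sum_natAbs_eq_two_mul_sum_toNat {ι : Type*} {s : Finset ι} {B : ι → ℤ}
    (hB : ∑ i ∈ s, B i = 0) : ∑ i ∈ s, (B i).natAbs = 2 * ∑ i ∈ s, (B i).toNat := by
  simp only [← Int.toNat_add_toNat_neg_eq_natAbs, sum_add_distrib,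
    sum_toNat_neg_eq_sum_toNat hB]
  ring

theorem exists_int_eq_mul_of_eq_or_eq_neg {K ι : Type*} [Field K] [CharZero K] [Fintype ι]
    {r c : ι → K} {η : K} {b : ι → ℤ} (hη : η ≠ 0) (hc : ∀ i, c i ≠ 0)
    (hcb : ∀ i, c i = η * b i) (hr : ∀ i, r i = c i ∨ r i = -c i) (hsum : ∑ i, r i = 0) :
    ∃ B : ι → ℤ, (∀ i, r i = η * B i) ∧ (∀ i, B i ≠ 0) ∧ ∑ i, B i = 0 ∧
      ∀ i, (B i).natAbs = (b i).natAbs := by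
  have hB (i : ι) : ∃ B : ℤ, r i = η * B ∧ B.natAbs = (b i).natAbs := by
    rcases hr i with h | h
    · exact ⟨b i, by rw [h, hcb], rfl⟩
    · exact ⟨-b i, by rw [h, hcb]; push_cast; ring, Int.natAbs_neg _⟩
  choose B hrB hBb using hB
  refine ⟨B, hrB, fun i hi => hc i ?_, ?_, hBb⟩
  · have hb : b i = 0 := by rw [← Int.natAbs_eq_zero, ← hBb i, hi, Int.natAbs_zero]
    simp [hcb, hb]
  · have : η * ∑ i, (B i : K) = 0 := by
      rw [mul_sum, ← hsum]
      exact sum_congr rfl fun i _ => (hrB i).symm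
    exact_mod_cast (mul_eq_zero.1 this).resolve_left hη

namespace Polynomial

section CommRing

variable {R ι : Type*} [CommRing R] [DecidableEq ι]

theorem derivative_pow_mul_self (p : R[X]) (n : ℕ) :
    derivative (p ^ n) * p = C (n : R) * derivative p * p ^ n := by
  rcases n with _ | n
  · simp
  · rw [derivative_pow, Nat.add_sub_cancel, pow_succ]
    ring

theorem derivative_prod_pow_mul_prod (s : Finset ι) (p : ι → R[X]) (e : ι → ℕ) :
    derivative (∏ i ∈ s, p i ^ e i) * ∏ i ∈ s, p i =
      (∏ i ∈ s, p i ^ e i) *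
        ∑ j ∈ s, C (e j : R) * derivative (p j) * ∏ i ∈ s.erase j, p i := by
  rw [derivative_prod_finset, sum_mul, mul_sum]
  refine sum_congr rfl fun j hj => ?_
  rw [← mul_prod_erase s p hj, ← mul_prod_erase s (fun i => p i ^ e i) hj]
  linear_combination (∏ i ∈ s.erase j, p i ^ e i) * (∏ i ∈ s.erase j, p i) *
    derivative_pow_mul_self (p j) (e j)

theorem wronskian_prod_pow_mul_prod (s : Finset ι) (p : ι → R[X]) (e f : ι → ℕ) :
    wronskian (∏ i ∈ s, p i ^ f i) (∏ i ∈ s, p i ^ e i) * ∏ i ∈ s, p i =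
      (∏ i ∈ s, p i ^ e i) * (∏ i ∈ s, p i ^ f i) *
        ∑ j ∈ s, C ((e j : R) - f j) * derivative (p j) * ∏ i ∈ s.erase j, p i := by
  simp only [C_sub, sub_mul, sum_sub_distrib, wronskian]
  linear_combination (∏ i ∈ s, p i ^ f i) * derivative_prod_pow_mul_prod s p e -
    (∏ i ∈ s, p i ^ e i) * derivative_prod_pow_mul_prod s p f

variable [Fintype ι]

/-- The numerator `N` of `∑ j, c j / (X - z j) = N / ∏ j, (X - z j)`. -/
noncomputable def partialFractionNumerator (z c : ι → R) : R[X] :=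
  ∑ j, C (c j) * ∏ i ∈ univ.erase j, (X - C (z i))

theorem partialFractionNumerator_const_mul (z c : ι → R) (a : R) :
    partialFractionNumerator z (fun i => a * c i) = C a * partialFractionNumerator z c := by
  simp only [partialFractionNumerator, C_mul, mul_sum, mul_assoc]

theorem eval_partialFractionNumerator (z c : ι → R) (i : ι) :
    (partialFractionNumerator z c).eval (z i) = c i * ∏ k ∈ univ.erase i, (z i - z k) := by
  rw [partialFractionNumerator, eval_finsetSum, sum_eq_single i]
  · simp [eval_prod]
  · intro j _ hji
    simp [eval_prod, prod_eq_zero (mem_erase.2 ⟨hji.symm, mem_univ i⟩)]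
  · simp

theorem wronskian_prod_X_sub_C_pow_mul_prod (z : ι → R) (B : ι → ℤ) :
    wronskian (∏ i, (X - C (z i)) ^ (-B i).toNat) (∏ i, (X - C (z i)) ^ (B i).toNat) *
        ∏ i, (X - C (z i)) =
      (∏ i, (X - C (z i)) ^ (B i).toNat) * (∏ i, (X - C (z i)) ^ (-B i).toNat) *
        partialFractionNumerator z (fun i => (B i : R)) := by
  rw [wronskian_prod_pow_mul_prod, partialFractionNumerator]
  congr 1
  refine sum_congr rfl fun j _ => ?_
  rw [derivative_X_sub_C, mul_one]
  congr 2
  conv_rhs => rw [← Int.toNat_sub_toNat_neg (B j)]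
  push_cast
  rfl

end CommRing

section IsDomain

variable {R ι : Type*} [CommRing R] [IsDomain R] [Fintype ι]

theorem eval_prod_X_sub_C_pow_ne_zero {z : ι → R} {w : R} (hw : ∀ i, z i ≠ w)
    (e : ι → ℕ) :
    (∏ i, (X - C (z i)) ^ e i).eval w ≠ 0 := by
  simp [eval_prod, prod_eq_zero_iff, sub_eq_zero, (hw _).symm]

theorem natDegree_prod_X_sub_C_pow (z : ι → R) (e : ι → ℕ) :
    (∏ i, (X - C (z i)) ^ e i).natDegree = ∑ i, e i := by
  simp [natDegree_prod _ _ fun i _ => pow_ne_zero _ (X_sub_C_ne_zero (z i))]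

theorem pow_succ_dvd_of_dvd_wronskian [CharZero R] {u h : R[X]} {w : R} (hu : u.IsRoot w)
    (hh : h.eval w ≠ 0) :
    ∀ {t : ℕ}, (X - C w) ^ t ∣ wronskian h u → (X - C w) ^ (t + 1) ∣ u
  | 0, _ => by simpa using dvd_iff_isRoot.2 hu
  | t + 1, ht => by
    obtain ⟨v, rfl⟩ :=
      pow_succ_dvd_of_dvd_wronskian hu hh ((pow_dvd_pow _ t.le_succ).trans ht)
    have hW : wronskian h ((X - C w) ^ (t + 1) * v) =
        (X - C w) ^ t * (C ((t : R) + 1) * h * v + (X - C w) * wronskian h v) := by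
      simp only [wronskian, derivative_mul, derivative_X_sub_C_pow, Nat.add_sub_cancel]
      push_cast
      ring
    have hdvd : X - C w ∣ C ((t : R) + 1) * h * v + (X - C w) * wronskian h v := by
      rw [hW, pow_succ] at ht
      exact (mul_dvd_mul_iff_left (pow_ne_zero _ (X_sub_C_ne_zero w))).1 ht
    have hv : v.IsRoot w := by
      rw [dvd_iff_isRoot] at hdvd
      simpa [hh, Nat.cast_add_one_ne_zero] using hdvd
    obtain ⟨v', rfl⟩ := dvd_iff_isRoot.2 hv
    exact ⟨v', by ring⟩

variable [DecidableEq ι]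

theorem ne_of_isRoot_partialFractionNumerator {z c : ι → R} (hz : Function.Injective z)
    (hc : ∀ i, c i ≠ 0) {w : R} (hw : (partialFractionNumerator z c).IsRoot w) (i : ι) :
    z i ≠ w := by
  rintro rfl
  rw [IsRoot, eval_partialFractionNumerator] at hw
  refine mul_ne_zero (hc i) (prod_ne_zero_iff.2 fun k hk => ?_) hw
  exact sub_ne_zero.2 (hz.ne (ne_of_mem_erase hk).symm)

end IsDomain

section Field

variable {K ι : Type*} [Field K] [Fintype ι] [DecidableEq ι]

theorem pow_dvd_wronskian_of_pow_dvd_partialFractionNumerator {z : ι → K} {B : ι → ℤ}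
    {w : K} (hw : ∀ i, z i ≠ w) {t : ℕ}
    (hdvd : (X - C w) ^ t ∣ partialFractionNumerator z (fun i => (B i : K))) :
    (X - C w) ^ t ∣
      wronskian (∏ i, (X - C (z i)) ^ (-B i).toNat) (∏ i, (X - C (z i)) ^ (B i).toNat) := by
  have hcop : IsCoprime ((X - C w) ^ t) (∏ i, (X - C (z i))) :=
    (IsCoprime.prod_right fun i _ =>
      isCoprime_X_sub_C_of_isUnit_sub (sub_ne_zero.2 (hw i).symm).isUnit).pow_left
  refine hcop.dvd_of_dvd_mul_right ?_
  rw [wronskian_prod_X_sub_C_pow_mul_prod]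
  exact hdvd.mul_left _

variable [CharZero K]

theorem two_mul_succ_le_sum_natAbs_of_pow_dvd_partialFractionNumerator [Nonempty ι]
    {z : ι → K} (hz : Function.Injective z) {B : ι → ℤ} (hB : ∀ i, B i ≠ 0)
    (hsum : ∑ i, B i = 0) {w : K} {t : ℕ} (ht : t ≠ 0)
    (hdvd : (X - C w) ^ t ∣ partialFractionNumerator z (fun i => (B i : K))) :
    2 * (t + 1) ≤ ∑ i, (B i).natAbs := by
  have hw := ne_of_isRoot_partialFractionNumerator hz (fun i => Int.cast_ne_zero.2 (hB i))
    (dvd_iff_isRoot.1 ((dvd_pow_self _ ht).trans hdvd))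
  set g := ∏ i, (X - C (z i)) ^ (B i).toNat
  set h := ∏ i, (X - C (z i)) ^ (-B i).toNat
  have hg : g.eval w ≠ 0 := eval_prod_X_sub_C_pow_ne_zero hw _
  have hh : h.eval w ≠ 0 := eval_prod_X_sub_C_pow_ne_zero hw _
  -- `u` is the numerator of `f - f(w)` for `f = g / h`, up to the factor `h(w)`.
  set u := C (h.eval w) * g - C (g.eval w) * h
  have hu : (X - C w) ^ (t + 1) ∣ u := by
    refine pow_succ_dvd_of_dvd_wronskian (by simp [u, mul_comm]) hh ?_
    have : wronskian h u = C (h.eval w) * wronskian h g := by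
      simp only [u, wronskian, derivative_sub, derivative_mul, derivative_C]
      ring
    rw [this]
    exact (pow_dvd_wronskian_of_pow_dvd_partialFractionNumerator hw hdvd).mul_left _
  have hu0 : u ≠ 0 := by
    obtain ⟨j, -, hj⟩ := exists_pos_of_sum_zero_of_exists_nonzero B hsum
      ⟨Classical.arbitrary ι, mem_univ _, hB _⟩
    have hgj : g.eval (z j) = 0 := by
      rw [eval_prod]
      exact prod_eq_zero (mem_univ j) (by simpa using hj)
    have hhj : h.eval (z j) ≠ 0 := by
      simpa [h, eval_prod, prod_eq_zero_iff, sub_eq_zero, hz.eq_iff] using hj.le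
    intro h0
    simpa [u, hgj, hg, hhj] using congrArg (eval (z j)) h0
  have hdeg : u.natDegree ≤ ∑ i, (B i).toNat := by
    refine (natDegree_sub_le _ _).trans (max_le ?_ ?_) <;>
      refine (natDegree_C_mul_le _ _).trans ?_
    · rw [natDegree_prod_X_sub_C_pow]
    · rw [natDegree_prod_X_sub_C_pow, sum_toNat_neg_eq_sum_toNat hsum]
  have htu : t + 1 ≤ u.natDegree := by
    simpa only [natDegree_pow, natDegree_X_sub_C, mul_one] using natDegree_le_of_dvd hu hu0
  calc 2 * (t + 1) ≤ 2 * ∑ i, (B i).toNat := by omega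
    _ = ∑ i, (B i).natAbs := (sum_natAbs_eq_two_mul_sum_toNat hsum).symm

theorem two_mul_succ_le_sum_natAbs_of_partialFractionNumerator_eq {κ : Type*} {z : ι → K}
    (hz : Function.Injective z) {B : ι → ℤ} (hB : ∀ i, B i ≠ 0) (hsum : ∑ i, B i = 0)
    {η L : K} (hη : η ≠ 0) (hL : L ≠ 0) {s : Finset κ} {w : κ → K} {e : κ → ℕ}
    (hN : partialFractionNumerator z (fun i => η * B i) = C L * ∏ j ∈ s, (X - C (w j)) ^ e j)
    {j₀ : κ} (hj₀ : j₀ ∈ s) (he : e j₀ ≠ 0) :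
    2 * (e j₀ + 1) ≤ ∑ i, (B i).natAbs := by
  rw [partialFractionNumerator_const_mul] at hN
  have hN0 : partialFractionNumerator z (fun i => (B i : K)) ≠ 0 :=
    right_ne_zero_of_mul (hN ▸ mul_ne_zero (C_ne_zero.2 hL)
      (prod_ne_zero_iff.2 fun j _ => pow_ne_zero _ (X_sub_C_ne_zero (w j))))
  obtain ⟨i, -, -⟩ := exists_ne_zero_of_sum_ne_zero hN0
  have : Nonempty ι := ⟨i⟩
  refine two_mul_succ_le_sum_natAbs_of_pow_dvd_partialFractionNumerator (w := w j₀)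
    hz hB hsum he ?_
  refine (isUnit_C.2 hη.isUnit).dvd_mul_left.1 ?_
  rw [hN]
  exact (dvd_prod_of_mem _ hj₀).mul_left _

end Field

end Polynomial

theorem coaxial_angles_necessity_of_21
    (n m : ℕ) (hmn : m ≤ n) (α : Fin n → ℝ) (a : Fin n → ℕ)
    (hpos : ∀ j : Fin n, (j : ℕ) < m → 0 < α j)
    (hint : ∀ j : Fin n, m ≤ (j : ℕ) → 2 ≤ a j ∧ α j = a j)
    (ε : Fin m → ℝ) (hε : ∀ i, ε i = 1 ∨ ε i = -1)
    (k' k'' : ℕ)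
    (q : ℕ) (hq : q = m + (k' + k''))
    (c : Fin q → ℝ)
    (hcdef : ∀ j : Fin q,
      c j = if h : (j : ℕ) < m then α (Fin.castLE hmn ⟨(j : ℕ), h⟩) else 1)
    (η : ℝ) (b : Fin q → ℤ) (hη : η ≠ 0)
    (hcb : ∀ j, c j = η * (b j : ℝ))
    (hexist :
      ∃ δ : Fin (k' + k'') → ℝ,
        (∀ i, δ i = 1 ∨ δ i = -1) ∧
        ∑ i : Fin m, ε i * α (Fin.castLE hmn i) + ∑ i, δ i = 0 ∧
        ∃ z : Fin q → ℂ, Function.Injective z ∧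
          ∃ K : ℂ, K ≠ 0 ∧
            ∃ w : Fin n → ℂ,
              (∀ j j' : Fin n, m ≤ (j : ℕ) → m ≤ (j' : ℕ) → w j = w j' → j = j') ∧
              ∑ j : Fin q,
                  Polynomial.C
                    (((if h : (j : ℕ) < m then ε ⟨(j : ℕ), h⟩ * α (Fin.castLE hmn ⟨(j : ℕ), h⟩)
                       else δ ⟨(j : ℕ) - m, by have := j.isLt; omega⟩) : ℝ) : ℂ) *
                    ∏ i ∈ Finset.univ.erase j, (Polynomial.X - Polynomial.C (z i))
                = Polynomial.C K *
                    ∏ j ∈ Finset.univ.filter (fun j : Fin n => m ≤ (j : ℕ)),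
                      (Polynomial.X - Polynomial.C (w j)) ^ (a j - 1)) :
    ∀ j : Fin n, m ≤ (j : ℕ) → 2 * α j ≤ ∑ i, |(b i : ℝ)| := by
  intro j₀ hj₀
  obtain ⟨ha, hαa⟩ := hint j₀ hj₀
  obtain ⟨δ, hδ, hsum, z, hz, K, hK, w, -, hpoly⟩ := hexist
  subst hq
  set r : Fin (m + (k' + k'')) → ℝ := fun j =>
    if h : (j : ℕ) < m then ε ⟨(j : ℕ), h⟩ * α (Fin.castLE hmn ⟨(j : ℕ), h⟩)
    else δ ⟨(j : ℕ) - m, by omega⟩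
  have hc (j) : c j ≠ 0 := by
    rw [hcdef]
    split_ifs with h
    exacts [(hpos _ h).ne', one_ne_zero]
  have hr_sign (j) : r j = c j ∨ r j = -c j := by
    rw [hcdef]
    simp only [r]
    split_ifs with h
    · rcases hε ⟨j, h⟩ with h' | h' <;> simp [h']
    · rcases hδ ⟨j - m, by omega⟩ with h' | h' <;> simp [h']
  have hr_sum : ∑ j, r j = 0 := by
    rw [← hsum, Fin.sum_univ_add]
    congr 1 <;> exact sum_congr rfl fun i _ => by simp [r, Fin.castLE]
  obtain ⟨B, hrB, hB0, hBsum, hBb⟩ :=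
    exists_int_eq_mul_of_eq_or_eq_neg hη hc hcb hr_sign hr_sum
  have hN : partialFractionNumerator z (fun j => (η : ℂ) * B j) =
      C K * ∏ j ∈ univ.filter (fun j : Fin n => m ≤ (j : ℕ)),
        (X - C (w j)) ^ (a j - 1) := by
    rw [← hpoly, partialFractionNumerator]
    refine sum_congr rfl fun j _ => ?_
    congr 2
    exact_mod_cast (hrB j).symm
  have hle := two_mul_succ_le_sum_natAbs_of_partialFractionNumerator_eq hz hB0 hBsum
    (by exact_mod_cast hη) hK hN (by simp [hj₀]) (by omega : a j₀ - 1 ≠ 0)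
  rw [Nat.sub_add_cancel (by omega)] at hle
  rw [hαa]
  simpa [hBb, Nat.cast_natAbs, Int.cast_abs] using (Nat.cast_le (α := ℝ)).2 hle
end

section
/- Let a, b, c, d be positive real numbers with a + b = c + d. There exist pairwise distinct complex numbers z_1, z_2, z_3, z_4, a nonzero constant C ∈ ℂ, and a complex number w such that a(X−z_2)(X−z_3)(X−z_4) + b(X−z_1)(X−z_3)(X−z_4) − c(X−z_1)(X−z_2)(X−z_4) − d(X−z_1)(X−z_2)(X−z_3) = C(X − w)^2 in ℂ[X], if and only if it is not the case that a = b = c = d. -/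
/-!
If all four residues equal `t`, comparing the coefficients of `N = K (X - w)²` gives
`K (w - z₁)(w - z₂) = 0 = K (w - z₃)(w - z₄)`, so `w` would be a pole of both pairs.
Conversely, write `a = b x²` and `c = d y²` with `x, y > 0`; suitable poles built from `x` and `y`
make `0` a double zero, and they are distinct exactly when `x ≠ y`, i.e. when `a ≠ c`.
If `a = c`, then `a ≠ d` and one swaps the two negative residues.
-/

open Polynomial

section CommRing

variable {R S : Type*} [CommRing R] [CommRing S]

/-- The numerator of `a/(X - z₁) + b/(X - z₂) - c/(X - z₃) - d/(X - z₄)`. -/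
noncomputable def residueNumerator (a b c d z₁ z₂ z₃ z₄ : R) : R[X] :=
  C a * ((X - C z₂) * (X - C z₃) * (X - C z₄)) +
  C b * ((X - C z₁) * (X - C z₃) * (X - C z₄)) -
  C c * ((X - C z₁) * (X - C z₂) * (X - C z₄)) -
  C d * ((X - C z₁) * (X - C z₂) * (X - C z₃))

def AdmitsDoubleZero (a b c d : R) : Prop :=
  ∃ z₁ z₂ z₃ z₄ : R,
    (z₁ ≠ z₂ ∧ z₁ ≠ z₃ ∧ z₁ ≠ z₄ ∧ z₂ ≠ z₃ ∧ z₂ ≠ z₄ ∧ z₃ ≠ z₄) ∧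
    ∃ K : R, K ≠ 0 ∧ ∃ w : R, residueNumerator a b c d z₁ z₂ z₃ z₄ = C K * (X - C w) ^ 2

theorem C_mul_X_sq_add_C_mul_X_add_C_eq_iff {p₂ p₁ p₀ q₂ q₁ q₀ : R} :
    C p₂ * X ^ 2 + C p₁ * X + C p₀ = C q₂ * X ^ 2 + C q₁ * X + C q₀ ↔
      p₂ = q₂ ∧ p₁ = q₁ ∧ p₀ = q₀ := by
  refine ⟨fun h ↦ ⟨?_, ?_, ?_⟩, by rintro ⟨rfl, rfl, rfl⟩; rfl⟩
  · simpa using congrArg (coeff · 2) h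
  · simpa using congrArg (coeff · 1) h
  · simpa using congrArg (coeff · 0) h

theorem C_mul_X_sub_C_sq (K w : R) :
    C K * (X - C w) ^ 2 = C K * X ^ 2 + C (-2 * K * w) * X + C (K * w ^ 2) := by
  simp only [map_mul, map_neg, map_pow, map_ofNat]
  ring

theorem residueNumerator_of_add_eq {a b c d : R} (hsum : a + b = c + d) (z₁ z₂ z₃ z₄ : R) :
    residueNumerator a b c d z₁ z₂ z₃ z₄ =
      C (a * z₁ + b * z₂ - c * z₃ - d * z₄) * X ^ 2 +
      C (a * (z₂ * z₃ + z₂ * z₄ + z₃ * z₄) + b * (z₁ * z₃ + z₁ * z₄ + z₃ * z₄)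
        - c * (z₁ * z₂ + z₁ * z₄ + z₂ * z₄) - d * (z₁ * z₂ + z₁ * z₃ + z₂ * z₃)) * X +
      C (-(a * (z₂ * z₃ * z₄) + b * (z₁ * z₃ * z₄) - c * (z₁ * z₂ * z₄) - d * (z₁ * z₂ * z₃))) := by
  have hsum' : C a + C b = C c + C d := by simpa only [map_add] using congrArg C hsum
  unfold residueNumerator
  simp only [map_add, map_sub, map_mul, map_neg]
  linear_combination (X ^ 3 - (C z₁ + C z₂ + C z₃ + C z₄) * X ^ 2) * hsum'

theorem residueNumerator_swap (a b c d z₁ z₂ z₃ z₄ : R) :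
    residueNumerator a b c d z₁ z₂ z₃ z₄ = residueNumerator a b d c z₁ z₂ z₄ z₃ := by
  unfold residueNumerator
  ring

theorem AdmitsDoubleZero.swap {a b c d : R} (h : AdmitsDoubleZero a b c d) :
    AdmitsDoubleZero a b d c := by
  obtain ⟨z₁, z₂, z₃, z₄, ⟨h12, h13, h14, h23, h24, h34⟩, K, hK, w, hN⟩ := h
  exact ⟨z₁, z₂, z₄, z₃, ⟨h12, h14, h13, h24, h23, h34.symm⟩, K, hK, w,
    by rwa [← residueNumerator_swap]⟩

theorem AdmitsDoubleZero.map {a b c d : R} (h : AdmitsDoubleZero a b c d) (f : R →+* S)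
    (hf : Function.Injective f) : AdmitsDoubleZero (f a) (f b) (f c) (f d) := by
  obtain ⟨z₁, z₂, z₃, z₄, ⟨h12, h13, h14, h23, h24, h34⟩, K, hK, w, hN⟩ := h
  refine ⟨f z₁, f z₂, f z₃, f z₄, ⟨hf.ne h12, hf.ne h13, hf.ne h14, hf.ne h23, hf.ne h24,
    hf.ne h34⟩, f K, (map_ne_zero_iff f hf).mpr hK, f w, ?_⟩
  simpa [residueNumerator, Polynomial.map_sub, Polynomial.map_add] using congrArg (Polynomial.map f) hN

/-- With `a = b x²` and `c = d y²`, the poles are `xy • (x, -1/x, y, -1/y)`: then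
`∑ cⱼ / zⱼ = 0` holds termwise and `∑ cⱼ / zⱼ² = 0` is `a + b = c + d`, so `0` is a double zero. -/
theorem residueNumerator_eq_C_mul_X_sq {b d x y : R} (h : b * (x ^ 2 + 1) = d * (y ^ 2 + 1)) :
    residueNumerator (b * x ^ 2) b (d * y ^ 2) d (x ^ 2 * y) (-y) (x * y ^ 2) (-x) =
      C (b * (x ^ 2 + 1) * (x - y) * (x * y + 1)) * X ^ 2 := by
  rw [residueNumerator_of_add_eq (by linear_combination h)]
  have hquad : C (b * (x ^ 2 + 1) * (x - y) * (x * y + 1)) * X ^ 2 =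
      C (b * (x ^ 2 + 1) * (x - y) * (x * y + 1)) * X ^ 2 + C 0 * X + C 0 := by simp
  rw [hquad, C_mul_X_sq_add_C_mul_X_add_C_eq_iff]
  refine ⟨?_, ?_, ?_⟩
  · linear_combination x * (y ^ 2 - 1) * h
  · linear_combination -(x ^ 2 * y ^ 2) * h
  · ring

end CommRing

theorem not_admitsDoubleZero_self {R : Type*} [CommRing R] [NoZeroDivisors R] [NeZero (2 : R)]
    (t : R) : ¬ AdmitsDoubleZero t t t t := by
  rintro ⟨z₁, z₂, z₃, z₄, ⟨-, h13, h14, h23, h24, -⟩, K, hK, w, hN⟩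
  rw [residueNumerator_of_add_eq rfl, C_mul_X_sub_C_sq,
    C_mul_X_sq_add_C_mul_X_add_C_eq_iff] at hN
  obtain ⟨h₂, h₁, h₀⟩ := hN
  have h12 : 2 * K * ((w - z₁) * (w - z₂)) = 0 := by
    linear_combination -(2 * z₁ * z₂) * h₂ - (z₁ + z₂) * h₁ - 2 * h₀
  have h34 : 2 * K * ((w - z₃) * (w - z₄)) = 0 := by
    linear_combination -(2 * z₃ * z₄) * h₂ - (z₃ + z₄) * h₁ - 2 * h₀
  simp only [mul_eq_zero, two_ne_zero, hK, sub_eq_zero, false_or] at h12 h34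
  rcases h12 with rfl | rfl <;> rcases h34 with h | h <;> contradiction

theorem exists_pos_mul_sq_eq {a b : ℝ} (ha : 0 < a) (hb : 0 < b) : ∃ x, 0 < x ∧ b * x ^ 2 = a :=
  ⟨√(a / b), by positivity, by rw [Real.sq_sqrt (by positivity)]; field_simp⟩

theorem admitsDoubleZero_of_ne {a b c d : ℝ} (ha : 0 < a) (hb : 0 < b) (hc : 0 < c) (hd : 0 < d)
    (hsum : a + b = c + d) (hac : a ≠ c) : AdmitsDoubleZero a b c d := by
  obtain ⟨x, hx, rfl⟩ := exists_pos_mul_sq_eq ha hb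
  obtain ⟨y, hy, rfl⟩ := exists_pos_mul_sq_eq hc hd
  have h : b * (x ^ 2 + 1) = d * (y ^ 2 + 1) := by linear_combination hsum
  have hxy : x ≠ y := by
    rintro rfl
    obtain rfl : b = d := mul_right_cancel₀ (by positivity) h
    exact hac rfl
  refine ⟨x ^ 2 * y, -y, x * y ^ 2, -x, ⟨?_, ?_, ?_, ?_, ?_, ?_⟩,
    b * (x ^ 2 + 1) * (x - y) * (x * y + 1), ?_, 0, ?_⟩
  · exact ne_of_gt (by linarith [show 0 < x ^ 2 * y by positivity])
  · exact fun h ↦ hxy (mul_left_cancel₀ (by positivity : x * y ≠ 0) (by linear_combination h))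
  · exact ne_of_gt (by linarith [show 0 < x ^ 2 * y by positivity])
  · exact ne_of_lt (by linarith [show 0 < x * y ^ 2 by positivity])
  · exact fun h ↦ hxy (neg_injective h).symm
  · exact ne_of_gt (by linarith [show 0 < x * y ^ 2 by positivity])
  · exact mul_ne_zero (mul_ne_zero (by positivity) (sub_ne_zero.mpr hxy)) (by positivity)
  · rw [residueNumerator_eq_C_mul_X_sq h, map_zero, sub_zero]

open Polynomial in
theorem two_positive_two_negative_double_zero_iff
    (a b c d : ℝ) (ha : 0 < a) (hb : 0 < b) (hc : 0 < c) (hd : 0 < d)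
    (hsum : a + b = c + d) :
    (∃ z₁ z₂ z₃ z₄ : ℂ,
        (z₁ ≠ z₂ ∧ z₁ ≠ z₃ ∧ z₁ ≠ z₄ ∧ z₂ ≠ z₃ ∧ z₂ ≠ z₄ ∧ z₃ ≠ z₄) ∧
        ∃ K : ℂ, K ≠ 0 ∧ ∃ w : ℂ,
          C (a : ℂ) * ((X - C z₂) * (X - C z₃) * (X - C z₄)) +
          C (b : ℂ) * ((X - C z₁) * (X - C z₃) * (X - C z₄)) -
          C (c : ℂ) * ((X - C z₁) * (X - C z₂) * (X - C z₄)) -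
          C (d : ℂ) * ((X - C z₁) * (X - C z₂) * (X - C z₃))
            = C K * (X - C w) ^ 2) ↔
      ¬ (a = b ∧ b = c ∧ c = d) := by
  change AdmitsDoubleZero (a : ℂ) b c d ↔ _
  constructor
  · rintro h ⟨rfl, rfl, rfl⟩
    exact not_admitsDoubleZero_self _ h
  · intro hne
    have hac_or_had : a ≠ c ∨ a ≠ d := by
      by_contra! h
      exact hne ⟨by linarith, by linarith, by linarith⟩
    have hreal : AdmitsDoubleZero a b c d := by
      rcases hac_or_had with hac | had
      · exact admitsDoubleZero_of_ne ha hb hc hd hsum hac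
      · exact (admitsDoubleZero_of_ne ha hb hd hc (by linarith) had).swap
    exact hreal.map Complex.ofRealHom Complex.ofReal_injective
end
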